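/- (Mediator density-ratio weighting identity.) Let Z ∈ {0,1}, D ∈ {0,1}, M discrete, X discrete, and Y integrable. Define π_z(x)=P(Z=z|X=x), p_{zd}(x)=P(D=d|Z=z,X=x), r_{zd}(m,x)=P(M=m|Z=z,D=d,X=x), μ_{zd}(m,x)=E[Y|Z=z,D=d,M=m,X=x], all strictly positive where needed. Then for any fixed z, z', d, d', E[ (1{Z=z, D=d}/(p_{zd}(X) π_z(X))) · (r_{z'd'}(M,X)/r_{zd}(M,X)) · Y ] = E[ Σ_m μ_{zd}(m, X) r_{z'd'}(m, X) ]. -/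

import Mathlib

open Finset Classical

/-- Probability of an event under a pmf on a finite sample space. -/
noncomputable def Pr {Ω : Type*} [Fintype Ω] (p : Ω → ℝ) (A : Ω → Prop) : ℝ :=
  ∑ ω, if A ω then p ω else 0

/-- Expectation under a pmf on a finite sample space. -/
noncomputable def Ex {Ω : Type*} [Fintype Ω] (p : Ω → ℝ) (f : Ω → ℝ) : ℝ :=
  ∑ ω, p ω * f ω

/-!
On a fiber `{M = m, X = x}` the weight is the constant `r_{z'd'}(m,x) / (p_{zd} π_z r_{zd})(m,x)`
times `1{Z = z, D = d}`, and the product `p_{zd}(x) π_z(x) r_{zd}(m,x)` telescopes to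
`P(Z = z, D = d, M = m, X = x) / P(X = x)`. Hence the fiber contributes
`P(X = x) · μ_{zd}(m,x) · r_{z'd'}(m,x)` to the left side, and summing over `m` gives the
contribution of `{X = x}` to the right side. Fibers with `P(X = x) = 0` contribute nothing to
either side.
-/

section FiniteExpectation

variable {Ω : Type*} [Fintype Ω] {p : Ω → ℝ}

theorem Pr_mono (hp : ∀ ω, 0 ≤ p ω) {A B : Ω → Prop} (h : ∀ ω, A ω → B ω) :
    Pr p A ≤ Pr p B :=
  sum_le_sum fun ω _ => by
    by_cases hA : A ω
    · simp [hA, h ω hA]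
    · simp only [hA, if_false]
      split_ifs
      exacts [hp ω, le_rfl]

theorem Pr_nonneg (hp : ∀ ω, 0 ≤ p ω) (A : Ω → Prop) : 0 ≤ Pr p A :=
  sum_nonneg fun ω _ => ite_nonneg (hp ω) le_rfl

theorem Pr_congr {A B : Ω → Prop} (h : ∀ ω, A ω ↔ B ω) : Pr p A = Pr p B :=
  congrArg (Pr p) (funext fun ω => propext (h ω))

theorem eq_zero_of_Pr_eq_zero (hp : ∀ ω, 0 ≤ p ω) {A : Ω → Prop} (h : Pr p A = 0) {ω : Ω}
    (hω : A ω) : p ω = 0 := by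
  have hnonneg : ∀ ω ∈ univ, 0 ≤ if A ω then p ω else 0 := fun ω _ => ite_nonneg (hp ω) le_rfl
  simpa [hω] using (sum_eq_zero_iff_of_nonneg hnonneg).mp h ω (mem_univ ω)

theorem Ex_ite_eq_zero_of_Pr_eq_zero (hp : ∀ ω, 0 ≤ p ω) {A B : Ω → Prop} [DecidablePred A]
    (hB : Pr p B = 0) (hAB : ∀ ω, A ω → B ω) (f : Ω → ℝ) :
    Ex p (fun ω => if A ω then f ω else 0) = 0 :=
  sum_eq_zero fun ω _ => by
    dsimp only
    split_ifs with hA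
    · rw [eq_zero_of_Pr_eq_zero hp hB (hAB ω hA), zero_mul]
    · rw [mul_zero]

theorem Ex_eq_sum_fiber {α : Type*} [Fintype α] [DecidableEq α] (X : Ω → α) (f : Ω → ℝ) :
    Ex p f = ∑ a, Ex p (fun ω => if X ω = a then f ω else 0) := by
  simp only [Ex, mul_ite, mul_zero]
  rw [sum_comm]
  simp

theorem Ex_ite_fiber {α : Type*} [DecidableEq α] (X : Ω → α) (g : α → ℝ) (a : α) :
    Ex p (fun ω => if X ω = a then g (X ω) else 0) = Pr p (fun ω => X ω = a) * g a := by
  rw [Ex, Pr, sum_mul]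
  refine sum_congr rfl fun ω _ => ?_
  split_ifs with h <;> simp [h]

theorem condProb_chain (hp : ∀ ω, 0 ≤ p ω) {A B C E : Ω → Prop}
    (h : 0 < Pr p (fun ω => A ω ∧ B ω ∧ C ω ∧ E ω)) :
    Pr p (fun ω => B ω ∧ A ω ∧ E ω) / Pr p (fun ω => A ω ∧ E ω) *
        (Pr p (fun ω => A ω ∧ E ω) / Pr p E) *
        (Pr p (fun ω => C ω ∧ A ω ∧ B ω ∧ E ω) / Pr p (fun ω => A ω ∧ B ω ∧ E ω)) =
      Pr p (fun ω => A ω ∧ B ω ∧ C ω ∧ E ω) / Pr p E := by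
  have hABE : 0 < Pr p (fun ω => A ω ∧ B ω ∧ E ω) :=
    h.trans_le (Pr_mono hp fun ω h => ⟨h.1, h.2.1, h.2.2.2⟩)
  have hAE : 0 < Pr p (fun ω => A ω ∧ E ω) := hABE.trans_le (Pr_mono hp fun ω h => ⟨h.1, h.2.2⟩)
  rw [Pr_congr fun ω => and_left_comm (a := B ω),
    Pr_congr fun ω => (and_left_comm (a := C ω)).trans (and_congr_right' and_left_comm)]
  field_simp

end FiniteExpectation

section MediatorWeighting

variable {Ω 𝒳 ℳ : Type*} [Fintype Ω] {p : Ω → ℝ} {Z D : Ω → Bool} {M : Ω → ℳ} {X : Ω → 𝒳}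
  {Y : Ω → ℝ} {z d : Bool}

theorem Ex_fiber_weighted (πz pzd : 𝒳 → ℝ) (rzd rz'd' : ℳ → 𝒳 → ℝ) (m : ℳ) (x : 𝒳) :
    Ex p (fun ω => if (M ω, X ω) = (m, x) then
      (if Z ω = z ∧ D ω = d then (1 : ℝ) else 0) / (pzd (X ω) * πz (X ω)) *
        (rz'd' (M ω) (X ω) / rzd (M ω) (X ω)) * Y ω else 0) =
      rz'd' m x / (pzd x * πz x * rzd m x) *
        Ex p (fun ω => if Z ω = z ∧ D ω = d ∧ M ω = m ∧ X ω = x then Y ω else 0) := by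
  rw [Ex, Ex, mul_sum]
  refine sum_congr rfl fun ω _ => ?_
  simp only [Prod.mk.injEq]
  by_cases hMX : M ω = m ∧ X ω = x
  · obtain ⟨rfl, rfl⟩ := hMX
    by_cases hZD : Z ω = z ∧ D ω = d
    · simp only [hZD, and_self, if_true]
      ring
    · simp [hZD]
  · simp [hMX]

end MediatorWeighting

theorem mediator_density_ratio_weighting_general
    {Ω 𝒳 ℳ : Type*} [Fintype Ω] [Fintype 𝒳] [Fintype ℳ]
    (p : Ω → ℝ) (hp : ∀ ω, 0 ≤ p ω)
    (Z D : Ω → Bool) (M : Ω → ℳ) (X : Ω → 𝒳) (Y : Ω → ℝ)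
    (z z' d d' : Bool)
    (πz pzd : 𝒳 → ℝ) (rzd rz'd' μzd : ℳ → 𝒳 → ℝ)
    (hπz : ∀ x, πz x =
      Pr p (fun ω => Z ω = z ∧ X ω = x) / Pr p (fun ω => X ω = x))
    (hpzd : ∀ x, pzd x =
      Pr p (fun ω => D ω = d ∧ Z ω = z ∧ X ω = x) /
        Pr p (fun ω => Z ω = z ∧ X ω = x))
    (hrzd : ∀ m x, rzd m x =
      Pr p (fun ω => M ω = m ∧ Z ω = z ∧ D ω = d ∧ X ω = x) /
        Pr p (fun ω => Z ω = z ∧ D ω = d ∧ X ω = x))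
    (hμzd : ∀ m x, μzd m x =
      Ex p (fun ω => if Z ω = z ∧ D ω = d ∧ M ω = m ∧ X ω = x then Y ω else 0) /
        Pr p (fun ω => Z ω = z ∧ D ω = d ∧ M ω = m ∧ X ω = x))
    -- positivity where needed
    (hpos : ∀ x, 0 < Pr p (fun ω => X ω = x) →
      (0 < Pr p (fun ω => Z ω = z' ∧ D ω = d' ∧ X ω = x) ∧
        ∀ m, 0 < Pr p (fun ω => Z ω = z ∧ D ω = d ∧ M ω = m ∧ X ω = x))) :
    Ex p (fun ω =>
        (if Z ω = z ∧ D ω = d then (1 : ℝ) else 0) / (pzd (X ω) * πz (X ω)) *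
          (rz'd' (M ω) (X ω) / rzd (M ω) (X ω)) * Y ω) =
      Ex p (fun ω => ∑ m, μzd m (X ω) * rz'd' m (X ω)) := by
  have weight : ∀ m x, rz'd' m x / (pzd x * πz x * rzd m x) *
        Ex p (fun ω => if Z ω = z ∧ D ω = d ∧ M ω = m ∧ X ω = x then Y ω else 0) =
      Pr p (fun ω => X ω = x) * (μzd m x * rz'd' m x) := by
    intro m x
    rcases (Pr_nonneg hp fun ω => X ω = x).eq_or_lt with hx | hx
    · rw [← hx, Ex_ite_eq_zero_of_Pr_eq_zero hp hx.symm fun ω h => h.2.2.2]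
      ring
    have hzdmx := (hpos x hx).2 m
    rw [hμzd, hpzd, hπz, hrzd, condProb_chain hp hzdmx]
    field_simp
  rw [Ex_eq_sum_fiber (fun ω => (M ω, X ω)), Fintype.sum_prod_type_right, Ex_eq_sum_fiber X]
  refine sum_congr rfl fun x _ => ?_
  rw [Ex_ite_fiber X (fun x => ∑ m, μzd m x * rz'd' m x), mul_sum]
  exact sum_congr rfl fun m _ => by rw [Ex_fiber_weighted, weight]

/-- Mediator density-ratio weighting identity:
`E[ 1{Z=z, D=d}/(p_{zd}(X)·π_z(X)) · (r_{z'd'}(M,X)/r_{zd}(M,X)) · Y ]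
  = E[ Σ_m μ_{zd}(m,X) · r_{z'd'}(m,X) ]`,
where `π_z(x) = P(Z=z|X=x)`, `p_{zd}(x) = P(D=d|Z=z,X=x)`,
`r_{zd}(m,x) = P(M=m|Z=z,D=d,X=x)` and `μ_{zd}(m,x) = E[Y|Z=z,D=d,M=m,X=x]`,
under the needed positivity conditions. -/
theorem mediator_density_ratio_weighting
    {Ω 𝒳 ℳ : Type*} [Fintype Ω] [Fintype 𝒳] [Fintype ℳ]
    (p : Ω → ℝ) (hp : ∀ ω, 0 ≤ p ω) (hpsum : ∑ ω, p ω = 1)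
    (Z D : Ω → Bool) (M : Ω → ℳ) (X : Ω → 𝒳) (Y : Ω → ℝ)
    (z z' d d' : Bool)
    (πz pzd : 𝒳 → ℝ) (rzd rz'd' μzd : ℳ → 𝒳 → ℝ)
    (hπz : ∀ x, πz x =
      Pr p (fun ω => Z ω = z ∧ X ω = x) / Pr p (fun ω => X ω = x))
    (hpzd : ∀ x, pzd x =
      Pr p (fun ω => D ω = d ∧ Z ω = z ∧ X ω = x) /
        Pr p (fun ω => Z ω = z ∧ X ω = x))
    (hrzd : ∀ m x, rzd m x =
      Pr p (fun ω => M ω = m ∧ Z ω = z ∧ D ω = d ∧ X ω = x) /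
        Pr p (fun ω => Z ω = z ∧ D ω = d ∧ X ω = x))
    (hrz'd' : ∀ m x, rz'd' m x =
      Pr p (fun ω => M ω = m ∧ Z ω = z' ∧ D ω = d' ∧ X ω = x) /
        Pr p (fun ω => Z ω = z' ∧ D ω = d' ∧ X ω = x))
    (hμzd : ∀ m x, μzd m x =
      Ex p (fun ω => if Z ω = z ∧ D ω = d ∧ M ω = m ∧ X ω = x then Y ω else 0) /
        Pr p (fun ω => Z ω = z ∧ D ω = d ∧ M ω = m ∧ X ω = x))
    -- positivity where needed
    (hpos : ∀ x, 0 < Pr p (fun ω => X ω = x) →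
      (0 < Pr p (fun ω => Z ω = z' ∧ D ω = d' ∧ X ω = x) ∧
        ∀ m, 0 < Pr p (fun ω => Z ω = z ∧ D ω = d ∧ M ω = m ∧ X ω = x))) :
    Ex p (fun ω =>
        (if Z ω = z ∧ D ω = d then (1 : ℝ) else 0) / (pzd (X ω) * πz (X ω)) *
          (rz'd' (M ω) (X ω) / rzd (M ω) (X ω)) * Y ω) =
      Ex p (fun ω => ∑ m, μzd m (X ω) * rz'd' m (X ω)) :=
  mediator_density_ratio_weighting_general p hp Z D M X Y z z' d d' πz pzd rzd rz'd' μzd hπz hpzd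
    hrzd hμzd hpos
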